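/- Let L be a linear contraction on a finite-dimensional Banach space X whose peripheral eigenvalues (eigenvalues on the unit circle) are all simple, let P^j be the spectral (Riesz) projector of the peripheral eigenvalue e^j, P = Σ_j P^j the peripheral spectral projector, Q = Id − P, and assume spr(LQ) < 1 where spr is the spectral radius. Then: (1) for each j, ‖P^j‖ = 1 and ‖P‖ = 1, hence ‖PL‖ ≤ 1 and ‖Q‖ ≤ 2; (2) if moreover X = I_1(H) for a finite-dimensional Hilbert space H and L is completely positive and trace preserving (CPTP), then both P and PL are CPTP. -/

import Mathlib

/-!
Write `P = ∑ j, P j` and `Q = 1 - P`. As `L` commutes with the `P j`, for `k ≥ 1`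
`L ^ k = ∑ j, e j ^ k • P j + (L * Q) ^ k`, and `(L * Q) ^ k → 0` by Gelfand's formula.
By compactness of the torus, `e j ^ n → 1` for all `j` at once along a sequence `n → ∞`,
so `P` is a limit of powers `L ^ n`. Hence `‖P‖ ≤ 1`, and `P` and `P * L` are CPTP when
`L` is, the CPTP maps forming a closed semigroup. The Cesàro averages of `(L / e j) ^ k * P`
converge to `P j`, which gives `‖P j‖ ≤ ‖P‖`; nonzero idempotents have norm at least `1`.
-/

open Matrix Finset Set
open scoped Kronecker ComplexOrder ENNReal

namespace RISPaper

variable {nS nE N : Type*}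

/-- Partial trace over the second (environment) factor. -/
noncomputable def ptraceE [Fintype nE] (A : Matrix (nS × nE) (nS × nE) ℂ) :
    Matrix nS nS ℂ := Matrix.of fun i j => ∑ k : nE, A (i, k) (j, k)

/-- Partial trace over the first (system) factor. -/
noncomputable def ptraceS [Fintype nS] (A : Matrix (nS × nE) (nS × nE) ℂ) :
    Matrix nE nE ℂ := Matrix.of fun i j => ∑ k : nS, A (k, i) (k, j)

/-- Logarithm of a Hermitian matrix, via the spectral decomposition (junk value `0`
on non-Hermitian matrices; eigenvalue `0` contributes `Real.log 0 = 0`). -/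
noncomputable def hlog [Fintype N] [DecidableEq N] (A : Matrix N N ℂ) : Matrix N N ℂ :=
  if hA : A.IsHermitian then
    (hA.eigenvectorUnitary : Matrix N N ℂ) *
      Matrix.diagonal (fun i => (Real.log (hA.eigenvalues i) : ℂ)) *
      (star (hA.eigenvectorUnitary : Matrix N N ℂ))
  else 0

/-- von Neumann entropy `S(η) = -Tr (η log η)`. -/
noncomputable def vnEntropy [Fintype N] [DecidableEq N] (A : Matrix N N ℂ) : ℝ :=
  (-(A * hlog A).trace).re

/-- Relative entropy `S(η|ν) = Tr (η (log η - log ν))`. -/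
noncomputable def relEntropy [Fintype N] [DecidableEq N] (A B : Matrix N N ℂ) : ℝ :=
  ((A * (hlog A - hlog B)).trace).re

/-- Gibbs state `exp(-βh)/Tr(exp(-βh))`. -/
noncomputable def gibbs [Fintype N] [DecidableEq N] (β : ℝ) (h : Matrix N N ℂ) : Matrix N N ℂ :=
  (NormedSpace.exp ((-β : ℂ) • h)).trace⁻¹ • NormedSpace.exp ((-β : ℂ) • h)

/-- A state: positive semidefinite with unit trace. -/
def IsState [Fintype N] (ρ : Matrix N N ℂ) : Prop := ρ.PosSemidef ∧ ρ.trace = 1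

/-- A faithful state: positive definite with unit trace. -/
def IsFaithfulState [Fintype N] (ρ : Matrix N N ℂ) : Prop := ρ.PosDef ∧ ρ.trace = 1

/-- Trace norm `‖A‖₁ = Tr √(AᴴA)`. -/
noncomputable def traceNorm [Fintype N] [DecidableEq N] (A : Matrix N N ℂ) : ℝ :=
  ((((Matrix.posSemidef_conjTranspose_mul_self A).1.eigenvectorUnitary : Matrix N N ℂ) *
    Matrix.diagonal (fun i => (Real.sqrt ((Matrix.posSemidef_conjTranspose_mul_self A).1.eigenvalues i) : ℂ)) *
    (star (Matrix.posSemidef_conjTranspose_mul_self A).1.eigenvectorUnitary : Matrix N N ℂ))).trace.re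

/-- Operator (ℓ²→ℓ²) norm of a matrix. -/
noncomputable def opNorm [Fintype N] [DecidableEq N] (A : Matrix N N ℂ) : ℝ :=
  ‖LinearMap.toContinuousLinearMap (Matrix.toEuclideanLin A)‖

/-- Operator norm of a map on matrices, with respect to the trace norm. -/
noncomputable def mapTNorm [Fintype N] [DecidableEq N]
    (f : Matrix N N ℂ → Matrix N N ℂ) : ℝ :=
  sSup ((fun A => traceNorm (f A)) '' {A | traceNorm A ≤ 1})

/-- The smallest point of the spectrum of a Hermitian matrix (junk value `0` otherwise). -/
noncomputable def infSpec [Fintype N] [DecidableEq N] [Nonempty N] (A : Matrix N N ℂ) : ℝ :=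
  if hA : A.IsHermitian then ⨅ i, hA.eigenvalues i else 0

/-- Amplification `Φ ⊗ id_k` of a map on matrices. -/
noncomputable def amp [Fintype N] (Φ : Matrix N N ℂ → Matrix N N ℂ) (k : ℕ)
    (M : Matrix (N × Fin k) (N × Fin k) ℂ) : Matrix (N × Fin k) (N × Fin k) ℂ :=
  Matrix.of fun p q => Φ (Matrix.of fun i j => M (i, p.2) (j, q.2)) p.1 q.1

/-- Complete positivity. -/
def IsCompletelyPositive [Fintype N] (Φ : Matrix N N ℂ → Matrix N N ℂ) : Prop :=
  ∀ (k : ℕ) (M : Matrix (N × Fin k) (N × Fin k) ℂ), M.PosSemidef → (amp Φ k M).PosSemidef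

/-- Trace preservation. -/
def IsTracePreserving [Fintype N] (Φ : Matrix N N ℂ → Matrix N N ℂ) : Prop :=
  ∀ A, (Φ A).trace = A.trace

/-- CPTP (quantum channel). -/
def IsCPTP [Fintype N] (Φ : Matrix N N ℂ → Matrix N N ℂ) : Prop :=
  IsCompletelyPositive Φ ∧ IsTracePreserving Φ

/-- Irreducibility of a map on matrices: the only invariant hereditary subalgebras are
trivial. -/
def IsIrreducible [Fintype N] [DecidableEq N] (Φ : Matrix N N ℂ → Matrix N N ℂ) : Prop :=
  ∀ p : Matrix N N ℂ, p.IsHermitian → p * p = p →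
    (∀ A, Φ (p * A * p) = p * Φ (p * A * p) * p) → p = 0 ∨ p = 1

/-- The divided-difference kernel entering the Hessian of relative entropy. -/
noncomputable def ddKernel (x y : ℝ) : ℝ :=
  if x = y then 1 / (2 * x) else (Real.log x - Real.log y) / (2 * (x - y))

/-- The quadratic form `F_η(A,B)` of the paper (second-order expansion of relative entropy
around the faithful state `η`), written via the eigendecomposition of `η`. -/
noncomputable def Fq [Fintype N] [DecidableEq N] (η A B : Matrix N N ℂ) : ℝ :=
  if hη : η.IsHermitian then
    (∑ a : N, ∑ b : N,
      (ddKernel (hη.eigenvalues a) (hη.eigenvalues b) : ℂ) *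
        ((star (hη.eigenvectorUnitary : Matrix N N ℂ) * A *
            (hη.eigenvectorUnitary : Matrix N N ℂ)) b a *
         (star (hη.eigenvectorUnitary : Matrix N N ℂ) * B *
            (hη.eigenvectorUnitary : Matrix N N ℂ)) a b)).re
  else 0

/-- Ordered product `f k * f (k-1) * ⋯ * f 1` (equal to `1` for `k = 0`). -/
noncomputable def opProd {α : Type*} [Monoid α] (f : ℕ → α) : ℕ → α
  | 0 => 1
  | k + 1 => f (k + 1) * opProd f k

/-- `P` is the spectral projection of `L` associated with the peripheral part of the
spectrum (eigenvalues of modulus one). -/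
def IsPeripheralProj {X : Type*} [NormedAddCommGroup X] [NormedSpace ℂ X]
    (L P : X →L[ℂ] X) : Prop :=
  P * P = P ∧ L * P = P * L ∧
    (LinearMap.range (P : X →ₗ[ℂ] X) =
      ⨆ z ∈ {z : ℂ | ‖z‖ = 1}, Module.End.maxGenEigenspace (L : X →ₗ[ℂ] X) z) ∧
    (LinearMap.ker (P : X →ₗ[ℂ] X) =
      ⨆ z ∈ {z : ℂ | ‖z‖ ≠ 1}, Module.End.maxGenEigenspace (L : X →ₗ[ℂ] X) z)

/-- `P` is the spectral projection of `L` associated with the eigenvalue `z`. -/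
def IsSpectralProjAt {X : Type*} [NormedAddCommGroup X] [NormedSpace ℂ X]
    (L P : X →L[ℂ] X) (z : ℂ) : Prop :=
  P * P = P ∧ L * P = P * L ∧
    (LinearMap.range (P : X →ₗ[ℂ] X) =
      Module.End.maxGenEigenspace (L : X →ₗ[ℂ] X) z) ∧
    (LinearMap.ker (P : X →ₗ[ℂ] X) =
      ⨆ w ∈ {w : ℂ | w ≠ z}, Module.End.maxGenEigenspace (L : X →ₗ[ℂ] X) w)

open Filter Topology

theorem tendsto_norm_pow_atTop_nhds_zero_of_spectralRadius_lt_one {A : Type*} [NormedRing A]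
    [NormedAlgebra ℂ A] [CompleteSpace A] {a : A} (h : spectralRadius ℂ a < 1) :
    Tendsto (fun n : ℕ => ‖a ^ n‖) atTop (𝓝 0) := by
  obtain ⟨r, hr, hr1⟩ := ENNReal.lt_iff_exists_nnreal_btwn.mp h
  have hroot : ∀ᶠ n : ℕ in atTop, (‖a ^ n‖₊ : ℝ≥0∞) ^ (1 / n : ℝ) < r :=
    (spectrum.pow_nnnorm_pow_one_div_tendsto_nhds_spectralRadius a).eventually_lt_const hr
  have hgeom : ∀ᶠ n : ℕ in atTop, ‖a ^ n‖ ≤ (r : ℝ) ^ n := by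
    filter_upwards [hroot, eventually_gt_atTop 0] with n hn hn0
    rw [one_div, ENNReal.rpow_inv_lt_iff (by positivity), ENNReal.rpow_natCast] at hn
    exact_mod_cast hn.le
  exact squeeze_zero' (.of_forall fun _ => norm_nonneg _) hgeom
    (tendsto_pow_atTop_nhds_zero_of_lt_one r.2 (by exact_mod_cast hr1))

theorem exists_tendsto_atTop_pow_tendsto_one {G : Type*} [Group G] [TopologicalSpace G]
    [IsTopologicalGroup G] [CompactSpace G] [FirstCountableTopology G] (g : G) :
    ∃ n : ℕ → ℕ, Tendsto n atTop atTop ∧ Tendsto (fun m => g ^ n m) atTop (𝓝 1) := by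
  obtain ⟨a, ψ, hψ, ha⟩ := CompactSpace.tendsto_subseq fun n => g ^ n
  -- `g ^ (ψ (2 * m) - ψ m) = g ^ ψ (2 * m) * (g ^ ψ m)⁻¹ → a * a⁻¹`, and the gap is at least `m`
  have h2 : Tendsto (fun m => 2 * m) atTop atTop := tendsto_id.const_mul_atTop' two_pos
  refine ⟨fun m => ψ (2 * m) - ψ m, tendsto_atTop_mono (fun m => ?_) tendsto_id, ?_⟩
  · have := hψ.add_le_nat m m
    rw [← two_mul] at this
    exact Nat.le_sub_of_add_le this
  · have hlim := (ha.comp h2).mul ha.inv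
    rw [mul_inv_cancel] at hlim
    refine hlim.congr fun m => ?_
    simp only [Function.comp_apply]
    rw [pow_sub _ (hψ.monotone (by omega))]

theorem exists_tendsto_atTop_forall_pow_tendsto_one {J : Type*} [Countable J] {e : J → ℂ}
    (he : ∀ j, ‖e j‖ = 1) :
    ∃ n : ℕ → ℕ, Tendsto n atTop atTop ∧ ∀ j, Tendsto (fun m => e j ^ n m) atTop (𝓝 1) := by
  let g : J → Circle := fun j => ⟨e j, mem_sphere_zero_iff_norm.2 (he j)⟩
  obtain ⟨n, hn, hg⟩ := exists_tendsto_atTop_pow_tendsto_one g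
  refine ⟨n, hn, fun j => ?_⟩
  exact (continuous_subtype_val.tendsto _).comp (tendsto_pi_nhds.1 hg j)

theorem tendsto_inv_mul_geom_sum {𝕜 : Type*} [RCLike 𝕜] {z : 𝕜} (hz : ‖z‖ ≤ 1) :
    Tendsto (fun n : ℕ => (n : 𝕜)⁻¹ * ∑ k ∈ range n, z ^ k) atTop
      (𝓝 (if z = 1 then 1 else 0)) := by
  split_ifs with hz1
  · refine tendsto_const_nhds.congr' ?_
    filter_upwards [eventually_gt_atTop 0] with n hn
    simp [hz1, inv_mul_cancel₀ (Nat.cast_ne_zero.2 hn.ne' : (n : 𝕜) ≠ 0)]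
  · have hz1' : 0 < ‖z - 1‖ := norm_pos_iff.2 (sub_ne_zero.2 hz1)
    rw [tendsto_zero_iff_norm_tendsto_zero]
    refine squeeze_zero (fun _ => norm_nonneg _) (fun n => ?_)
      (by simpa using tendsto_inv_atTop_nhds_zero_nat.mul_const (2 / ‖z - 1‖))
    rw [geom_sum_eq hz1, norm_mul, norm_inv, RCLike.norm_natCast, norm_div]
    gcongr
    calc ‖z ^ n - 1‖ ≤ ‖z ^ n‖ + ‖(1 : 𝕜)‖ := norm_sub_le _ _
      _ ≤ 2 := by rw [norm_pow, norm_one]; linarith [pow_le_one₀ (norm_nonneg z) hz (n := n)]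

theorem IsIdempotentElem.one_le_norm {R : Type*} [NonUnitalNormedRing R] {p : R}
    (hp : IsIdempotentElem p) (h0 : p ≠ 0) : 1 ≤ ‖p‖ := by
  have hpos : 0 < ‖p‖ := norm_pos_iff.2 h0
  refine le_of_mul_le_mul_left ?_ hpos
  calc ‖p‖ * 1 = ‖p * p‖ := by rw [hp.eq, mul_one]
    _ ≤ ‖p‖ * ‖p‖ := norm_mul_le p p

theorem norm_inv_smul_sum_pow_le_one {𝕜 A : Type*} [RCLike 𝕜] [NormedRing A] [NormOneClass A]
    [NormedAlgebra 𝕜 A] {a : A} (ha : ‖a‖ ≤ 1) (n : ℕ) :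
    ‖(n : 𝕜)⁻¹ • ∑ k ∈ range n, a ^ k‖ ≤ 1 := by
  have hsum : ‖∑ k ∈ range n, a ^ k‖ ≤ n := by
    calc ‖∑ k ∈ range n, a ^ k‖ ≤ ∑ k ∈ range n, ‖a ^ k‖ := norm_sum_le _ _
      _ ≤ ∑ _k ∈ range n, (1 : ℝ) :=
        sum_le_sum fun k _ => (norm_pow_le a k).trans (pow_le_one₀ (norm_nonneg a) ha)
      _ = n := by simp
  rw [norm_smul, norm_inv, RCLike.norm_natCast]
  rcases n.eq_zero_or_pos with rfl | hn
  · simp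
  · exact inv_mul_le_one_of_le₀ hsum (Nat.cast_nonneg n)

structure IsEigenprojections {R A J : Type*} [CommSemiring R] [Semiring A] [Algebra R A]
    (L : A) (e : J → R) (P : J → A) : Prop extends OrthogonalIdempotents P where
  commute : ∀ j, Commute L (P j)
  mul_eq_smul : ∀ j, L * P j = e j • P j

namespace IsEigenprojections

section Algebra

variable {R A J : Type*} [CommSemiring R] [Ring A] [Algebra R A]
  {L : A} {e : J → R} {P : J → A}

theorem pow_mul (h : IsEigenprojections L e P) (k : ℕ) (j : J) :
    L ^ k * P j = e j ^ k • P j := by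
  induction k with
  | zero => simp
  | succ k ih => rw [pow_succ', mul_assoc, ih, mul_smul_comm, h.mul_eq_smul, smul_smul, pow_succ]

theorem pow_mul_sum [Fintype J] (h : IsEigenprojections L e P) (k : ℕ) :
    L ^ k * ∑ j, P j = ∑ j, e j ^ k • P j := by
  simp only [Finset.mul_sum, h.pow_mul]

theorem pow_succ_eq_sum_add [Fintype J] (h : IsEigenprojections L e P) (k : ℕ) :
    L ^ (k + 1) = ∑ j, e j ^ (k + 1) • P j + (L * (1 - ∑ j, P j)) ^ (k + 1) := by
  have hQ : IsIdempotentElem (1 - ∑ j, P j) := h.isIdempotentElem_sum.one_sub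
  have hLQ : Commute L (1 - ∑ j, P j) :=
    (Commute.one_right L).sub_right (Commute.sum_right _ _ _ fun j _ => h.commute j)
  rw [hLQ.mul_pow, hQ.pow_succ_eq, ← h.pow_mul_sum, mul_sub, mul_one, add_sub_cancel]

end Algebra

section Normed

variable {A J : Type*} [NormedRing A] [NormedAlgebra ℂ A] [Fintype J]
  {L : A} {e : J → ℂ} {P : J → A}

theorem exists_tendsto_pow_nhds_sum [CompleteSpace A] (h : IsEigenprojections L e P)
    (he : ∀ j, ‖e j‖ = 1) (hspr : spectralRadius ℂ (L * (1 - ∑ j, P j)) < 1) :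
    ∃ n : ℕ → ℕ, Tendsto n atTop atTop ∧ Tendsto (fun m => L ^ n m) atTop (𝓝 (∑ j, P j)) := by
  obtain ⟨n, hn, hen⟩ := exists_tendsto_atTop_forall_pow_tendsto_one he
  refine ⟨n, hn, ?_⟩
  have hrem : Tendsto (fun m => (L * (1 - ∑ j, P j)) ^ n m) atTop (𝓝 0) :=
    tendsto_zero_iff_norm_tendsto_zero.2
      ((tendsto_norm_pow_atTop_nhds_zero_of_spectralRadius_lt_one hspr).comp hn)
  have hlim := (tendsto_finsetSum univ fun j _ => (hen j).smul_const (P j)).add hrem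
  simp only [one_smul, add_zero] at hlim
  refine hlim.congr' ?_
  filter_upwards [hn.eventually_gt_atTop 0] with m hm
  obtain ⟨k, hk⟩ := Nat.exists_eq_add_one_of_ne_zero hm.ne'
  rw [hk, h.pow_succ_eq_sum_add]

theorem tendsto_cesaro_mul_sum (h : IsEigenprojections L e P) (he : ∀ j, ‖e j‖ = 1)
    (he_inj : Function.Injective e) (j : J) :
    Tendsto (fun n : ℕ => ((n : ℂ)⁻¹ • ∑ k ∈ range n, ((e j)⁻¹ • L) ^ k) * ∑ i, P i)
      atTop (𝓝 (P j)) := by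
  have hej : e j ≠ 0 := norm_ne_zero_iff.1 (by simp [he j])
  have hratio : ∀ i, ‖e i / e j‖ ≤ 1 := fun i => by simp [he]
  have hlim := tendsto_finsetSum univ fun i _ =>
    (tendsto_inv_mul_geom_sum (hratio i)).smul_const (P i)
  have hdiag : ∑ i, (if e i / e j = 1 then (1 : ℂ) else 0) • P i = P j := by
    rw [Finset.sum_eq_single j (fun i _ hij => by simp [div_eq_one_iff_eq hej, he_inj.ne hij])
      (by simp)]
    simp [hej]
  rw [hdiag] at hlim
  refine hlim.congr fun n => ?_
  simp only [smul_mul_assoc, Finset.sum_mul, smul_pow, h.pow_mul_sum, Finset.smul_sum, smul_smul]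
  rw [Finset.sum_comm]
  refine Finset.sum_congr rfl fun c _ => ?_
  rw [← Finset.sum_smul, Finset.mul_sum]
  exact congrArg (· • P c) (Finset.sum_congr rfl fun k _ => by ring)

end Normed

end IsEigenprojections

section CPTP

variable [Fintype N]

theorem isClosed_setOf_posSemidef : IsClosed {M : Matrix N N ℂ | M.PosSemidef} := by
  simp only [Matrix.posSemidef_iff_dotProduct_mulVec, Set.ofPred_and, Set.ofPred_forall]
  exact (isClosed_eq continuous_id.matrix_conjTranspose continuous_id).inter
    (isClosed_iInter fun x => isClosed_le continuous_const (by fun_prop))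

theorem isCPTP_id : IsCPTP fun A : Matrix N N ℂ => A :=
  ⟨fun _ _ hM => hM, fun _ => rfl⟩

theorem IsCPTP.comp {Φ Ψ : Matrix N N ℂ → Matrix N N ℂ} (hΦ : IsCPTP Φ) (hΨ : IsCPTP Ψ) :
    IsCPTP (Φ ∘ Ψ) :=
  ⟨fun k M hM => hΦ.1 k _ (hΨ.1 k M hM), fun A => (hΦ.2 _).trans (hΨ.2 A)⟩

theorem isClosed_setOf_isCPTP : IsClosed {Φ : Matrix N N ℂ → Matrix N N ℂ | IsCPTP Φ} := by
  simp only [IsCPTP, IsCompletelyPositive, IsTracePreserving, Set.ofPred_and, Set.ofPred_forall]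
  refine (isClosed_iInter fun k => isClosed_iInter fun M => isClosed_iInter fun _ => ?_).inter
    (isClosed_iInter fun A => isClosed_eq (by fun_prop) continuous_const)
  exact isClosed_setOf_posSemidef.preimage (by unfold amp; fun_prop)

variable {X : Type*} [NormedAddCommGroup X] [NormedSpace ℂ X] (φ : X ≃ₗ[ℂ] Matrix N N ℂ)

theorem isCPTP_conj_pow {L : X →L[ℂ] X} (hL : IsCPTP fun A => φ (L (φ.symm A))) (k : ℕ) :
    IsCPTP fun A => φ ((L ^ k) (φ.symm A)) := by
  induction k with
  | zero => simpa using isCPTP_id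
  | succ k ih =>
    convert hL.comp ih using 1
    funext A
    simp [pow_succ']

theorem isCPTP_conj_of_tendsto [FiniteDimensional ℂ X] {ι : Type*} {F : Filter ι} [F.NeBot]
    {s : ι → X →L[ℂ] X} {T : X →L[ℂ] X} (hs : Tendsto s F (𝓝 T))
    (h : ∀ᶠ i in F, IsCPTP fun A => φ (s i (φ.symm A))) :
    IsCPTP fun A => φ (T (φ.symm A)) :=
  isClosed_setOf_isCPTP.mem_of_tendsto (tendsto_pi_nhds.2 fun A =>
    ((LinearMap.continuous_of_finiteDimensional φ.toLinearMap).tendsto _).comp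
      (((ContinuousLinearMap.apply ℂ X (φ.symm A)).continuous.tendsto T).comp hs)) h

end CPTP

/-- **Norm bounds for peripheral spectral projections of a contraction** (and preservation
of the CPTP property): if `L` is a contraction on a finite-dimensional Banach space whose
peripheral eigenvalues `e j` are simple, with (Riesz) spectral projections `P j`, and the
strictly contracting part `L Q` has spectral radius `< 1`, then `‖P j‖ = 1`, `‖P‖ = 1`,
`‖P L‖ ≤ 1`, `‖Q‖ ≤ 2`; moreover if, under an identification of `X` with the trace class
operators on a finite-dimensional Hilbert space, `L` is CPTP, then so are `P` and `P L`. -/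
theorem peripheral_projection_bounds_and_CPTP
    {X : Type*} [NormedAddCommGroup X] [NormedSpace ℂ X] [FiniteDimensional ℂ X]
    [Nontrivial X]
    (L : X →L[ℂ] X) (hL : ‖L‖ ≤ 1)
    {J : Type*} [Fintype J] [Nonempty J]
    (e : J → ℂ) (P : J → (X →L[ℂ] X)) (Q : X →L[ℂ] X)
    (he_unit : ∀ j, ‖e j‖ = 1)
    (he_inj : Function.Injective e)
    (hP_idem : ∀ j, P j * P j = P j)
    (hP_comm : ∀ j, L * P j = P j * L)
    (hP_eig : ∀ j, L * P j = e j • P j)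
    (hP_disj : ∀ i j, i ≠ j → P i * P j = 0)
    (hP_rank : ∀ j, Module.finrank ℂ (LinearMap.range ((P j : X →ₗ[ℂ] X))) = 1)
    (hQ : Q = 1 - ∑ j, P j)
    (hspr : spectralRadius ℂ (L * Q) < 1) :
    (∀ j, ‖P j‖ = 1) ∧ ‖∑ j, P j‖ = 1 ∧ ‖(∑ j, P j) * L‖ ≤ 1 ∧ ‖Q‖ ≤ 2 ∧
    (∀ (n : Type) [Fintype n] [DecidableEq n] (φ : X ≃ₗ[ℂ] Matrix n n ℂ),
      IsCPTP (fun A => φ (L (φ.symm A))) →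
        IsCPTP (fun A => φ ((∑ j, P j) (φ.symm A))) ∧
        IsCPTP (fun A => φ (((∑ j, P j) * L) (φ.symm A)))) := by
  have hP : IsEigenprojections L e P := ⟨⟨hP_idem, fun i j => hP_disj i j⟩, hP_comm, hP_eig⟩
  have hP_ne (j : J) : P j ≠ 0 := fun h0 => by
    have h := hP_rank j
    rw [h0, ContinuousLinearMap.toLinearMap_zero, LinearMap.range_zero, finrank_bot] at h
    exact zero_ne_one h
  obtain ⟨t, -, hLt⟩ := hP.exists_tendsto_pow_nhds_sum he_unit (hQ ▸ hspr)
  have hsum_le : ‖∑ j, P j‖ ≤ 1 :=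
    le_of_tendsto' hLt.norm fun m => (norm_pow_le L _).trans (pow_le_one₀ (norm_nonneg L) hL)
  have hsum_ne : ∑ j, P j ≠ 0 := fun h0 => by
    obtain ⟨j⟩ := ‹Nonempty J›
    exact hP_ne j (by rw [← hP.mul_sum_of_mem (mem_univ j), h0, mul_zero])
  have hsum : ‖∑ j, P j‖ = 1 :=
    hsum_le.antisymm (IsIdempotentElem.one_le_norm hP.isIdempotentElem_sum hsum_ne)
  have hPj_le (j : J) : ‖P j‖ ≤ 1 := by
    have hLj : ‖(e j)⁻¹ • L‖ ≤ 1 := by rwa [norm_smul, norm_inv, he_unit, inv_one, one_mul]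
    refine le_of_tendsto' (hP.tendsto_cesaro_mul_sum he_unit he_inj j).norm fun k => ?_
    exact (norm_mul_le _ _).trans
      (mul_le_one₀ (norm_inv_smul_sum_pow_le_one hLj k) (norm_nonneg _) hsum_le)
  refine ⟨fun j => (hPj_le j).antisymm (IsIdempotentElem.one_le_norm (hP_idem j) (hP_ne j)),
    hsum, (norm_mul_le _ _).trans (by rwa [hsum, one_mul]), ?_, ?_⟩
  · rw [hQ]
    exact (norm_sub_le _ _).trans (by rw [norm_one, hsum]; norm_num)
  · intro n _ _ φ hφ
    have hpow := isCPTP_conj_pow φ hφ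
    refine ⟨isCPTP_conj_of_tendsto φ hLt (.of_forall fun m => hpow _),
      isCPTP_conj_of_tendsto φ (hLt.mul_const L) (.of_forall fun m => ?_)⟩
    simpa only [← pow_succ] using hpow (t m + 1)

end RISPaper
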